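/- arXiv:2505.15803 — 5 statements merged into one kernel-verified Lean document; each statement's English description precedes it below -/
import Mathlib

section
/- Let λ > 0 and β ∈ ℝ, and let β̃ = β + ε where the perturbation satisfies |ε| ≤ λ/2. Then the soft-thresholded value satisfies |T_λ(β̃) − β| ≤ 6·min(|β|, λ). -/
/-- Soft-thresholding operator: `T_λ(x) = sign(x) · max(|x| − λ, 0)`. -/
noncomputable def softThreshold (lam x : ℝ) : ℝ :=
  Real.sign x * max (|x| - lam) 0

/-- if `|ε| ≤ λ/2` then `|T_λ(β + ε) − β| ≤ 6 · min(|β|, λ)`. -/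
theorem stmt_0 (lam β ε : ℝ) (hlam : 0 < lam) (hε : |ε| ≤ lam / 2) :
    |softThreshold lam (β + ε) - β| ≤ 6 * min |β| lam := by
  unfold softThreshold
  have habs : |β| - |β + ε| ≤ |ε| := by
    have := abs_sub_abs_le_abs_sub β (β + ε)
    have h2 : β - (β + ε) = -ε := by ring
    rw [h2, abs_neg] at this
    linarith
  have habs2 : |β + ε| - |β| ≤ |ε| := by
    have := abs_sub_abs_le_abs_sub (β + ε) β
    have h2 : β + ε - β = ε := by ring
    rw [h2] at this
    linarith
  have hb0 : (0:ℝ) ≤ |β| := abs_nonneg β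
  rcases le_or_gt (|β + ε|) lam with h | h
  · rw [max_eq_right (by linarith)]
    simp only [mul_zero, zero_sub, abs_neg]
    rcases le_total (|β|) lam with hm | hm
    · rw [min_eq_left hm]; linarith
    · rw [min_eq_right hm]; linarith
  · rw [max_eq_left (by linarith)]
    have hs : Real.sign (β + ε) * |β + ε| = β + ε := by
      rcases lt_trichotomy (β + ε) 0 with hx | hx | hx
      · rw [Real.sign_of_neg hx, abs_of_neg hx]; ring
      · rw [hx]; simp
      · rw [Real.sign_of_pos hx, abs_of_pos hx]; ring
    have hterm : Real.sign (β + ε) * (|β + ε| - lam) - β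
        = ε - Real.sign (β + ε) * lam := by
      have : Real.sign (β + ε) * (|β + ε| - lam)
          = (β + ε) - Real.sign (β + ε) * lam := by
        rw [mul_sub, hs]
      rw [this]; ring
    rw [hterm]
    have hsb : |Real.sign (β + ε)| ≤ 1 := by
      rcases Real.sign_apply_eq (β + ε) with h1 | h1 | h1 <;> rw [h1] <;> norm_num
    have hbound : |ε - Real.sign (β + ε) * lam| ≤ lam / 2 + lam := by
      calc |ε - Real.sign (β + ε) * lam| ≤ |ε| + |Real.sign (β + ε) * lam| := abs_sub _ _
        _ ≤ lam / 2 + 1 * lam := by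
            rw [abs_mul, abs_of_pos hlam]
            have : |Real.sign (β + ε)| * lam ≤ 1 * lam :=
              mul_le_mul_of_nonneg_right hsb hlam.le
            linarith
        _ = lam / 2 + lam := by ring
    have hβ : lam / 2 ≤ |β| := by linarith
    rcases le_total (|β|) lam with hm | hm
    · rw [min_eq_left hm]; linarith
    · rw [min_eq_right hm]; linarith
end

section
/- Let X and Y be finite sets, let p_Ts and s be probability mass functions on X × Y with s(x,y) > 0 whenever p_Ts(x,y) > 0, let β ∈ [0,1], and form the training distribution p_Tr(x,y) = (1−β)·p_Ts(x,y) + β·s(x,y). Assume perfect model training, i.e., the model's predictive conditional distribution is q(y|x) = p_Tr(x,y)/p_Tr(x) where p_Tr(x) = Σ_y p_Tr(x,y). Then the test log-loss L = −Σ_{(x,y)} p_Ts(x,y)·log q(y|x) satisfies L − H( p_Ts(y|x) ) ≤ β·KL( p_Ts(x,y) ‖ s(x,y) ), where H( p_Ts(y|x) ) = −Σ_{(x,y)} p_Ts(x,y)·log( p_Ts(x,y)/p_Ts(x) ) is the conditional entropy of the test distribution and KL( p_Ts(x,y) ‖ s(x,y) ) = Σ_{(x,y)} p_Ts(x,y)·log(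 p_Ts(x,y)/s(x,y) ). In particular, the excess loss over the intrinsic error is bounded above by a monotone non-decreasing function of the dissimilarity proportion β. -/
/-!
Under perfect training the excess loss `L - H` is a difference of relative entropies
(chain rule): `KL(p_Ts ‖ p_Tr)` on `X × Y` minus `KL` of the `X`-marginals of `p_Ts` and `p_Tr`.
The marginal term is nonnegative by Gibbs' inequality, and concavity of `log` gives
`log p_Tr ≥ (1 - β) log p_Ts + β log s`, whence `KL(p_Ts ‖ p_Tr) ≤ β KL(p_Ts ‖ s)`.
Gibbs' inequality also gives `KL(p_Ts ‖ s) ≥ 0`, so the bound is monotone in `β`.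
-/

open Real Finset

lemma sub_le_mul_log_div {p q : ℝ} (hp : 0 ≤ p) (hq : 0 ≤ q) (hpq : 0 < p → 0 < q) :
    p - q ≤ p * log (p / q) := by
  rcases hp.eq_or_lt with rfl | hp
  · simpa using hq
  have hq := hpq hp
  calc p - q = p * (1 - (p / q)⁻¹) := by field_simp
    _ ≤ p * log (p / q) :=
      mul_le_mul_of_nonneg_left (one_sub_inv_le_log_of_pos (div_pos hp hq)) hp.le

section Sums

variable {ι : Type*} (s : Finset ι) {p q : ι → ℝ}

theorem Finset.sum_sub_sum_le_sum_mul_log_div (hp : ∀ i ∈ s, 0 ≤ p i) (hq : ∀ i ∈ s, 0 ≤ q i)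
    (hpq : ∀ i ∈ s, 0 < p i → 0 < q i) :
    ∑ i ∈ s, p i - ∑ i ∈ s, q i ≤ ∑ i ∈ s, p i * log (p i / q i) := by
  rw [← sum_sub_distrib]
  exact sum_le_sum fun i hi => sub_le_mul_log_div (hp i hi) (hq i hi) (hpq i hi)

theorem Finset.sum_pos_of_pos_imp_pos (hq : ∀ i ∈ s, 0 ≤ q i)
    (hpq : ∀ i ∈ s, 0 < p i → 0 < q i) (hsum : 0 < ∑ i ∈ s, p i) : 0 < ∑ i ∈ s, q i := by
  obtain ⟨i, hi, hpi⟩ := exists_lt_of_sum_lt (s := s) (f := 0) (g := p) (by simpa using hsum)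
  exact (hpq i hi hpi).trans_le (single_le_sum hq hi)

/-- Chain rule for relative entropy: normalizing `p` and `q` on `s` lowers their relative entropy
by the relative entropy of the total masses. -/
theorem Finset.sum_mul_log_div_sum_sub_sum_mul_log_div_sum (hp : ∀ i ∈ s, 0 ≤ p i)
    (hq : ∀ i ∈ s, 0 ≤ q i) (hpq : ∀ i ∈ s, 0 < p i → 0 < q i) :
    ∑ i ∈ s, p i * log (p i / ∑ j ∈ s, p j) - ∑ i ∈ s, p i * log (q i / ∑ j ∈ s, q j) =
      ∑ i ∈ s, p i * log (p i / q i) -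
        (∑ i ∈ s, p i) * log ((∑ i ∈ s, p i) / ∑ i ∈ s, q i) := by
  have hterm : ∀ i ∈ s, p i * log (p i / ∑ j ∈ s, p j) - p i * log (q i / ∑ j ∈ s, q j) =
      p i * log (p i / q i) - p i * log ((∑ j ∈ s, p j) / ∑ j ∈ s, q j) := by
    intro i hi
    rcases (hp i hi).eq_or_lt with h | h
    · simp [← h]
    have hqi := hpq i hi h
    have hP : 0 < ∑ j ∈ s, p j := h.trans_le (single_le_sum hp hi)
    have hQ : 0 < ∑ j ∈ s, q j := hqi.trans_le (single_le_sum hq hi)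
    rw [log_div h.ne' hP.ne', log_div hqi.ne' hQ.ne', log_div h.ne' hqi.ne',
      log_div hP.ne' hQ.ne']
    ring
  rw [← sum_sub_distrib, sum_congr rfl hterm, sum_sub_distrib, ← sum_mul]

end Sums

lemma mix_pos {p s β : ℝ} (hp : 0 < p) (hs : 0 < s) (hβ : β ∈ Set.Icc (0 : ℝ) 1) :
    0 < (1 - β) * p + β * s := by
  simpa using convex_Ioi (0 : ℝ) hp hs (sub_nonneg.2 hβ.2) hβ.1 (by ring)

lemma mul_log_div_mix_le {p s β : ℝ} (hp : 0 ≤ p) (hs : 0 < p → 0 < s)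
    (hβ : β ∈ Set.Icc (0 : ℝ) 1) :
    p * log (p / ((1 - β) * p + β * s)) ≤ β * (p * log (p / s)) := by
  rcases hp.eq_or_lt with rfl | hp
  · simp
  have hs := hs hp
  have hr := mix_pos hp hs hβ
  have hconcave : (1 - β) * log p + β * log s ≤ log ((1 - β) * p + β * s) := by
    simpa using strictConcaveOn_log_Ioi.concaveOn.2 (Set.mem_Ioi.2 hp) (Set.mem_Ioi.2 hs)
      (sub_nonneg.2 hβ.2) hβ.1 (by ring)
  rw [log_div hp.ne' hr.ne', log_div hp.ne' hs.ne']
  calc p * (log p - log ((1 - β) * p + β * s)) ≤ p * (β * (log p - log s)) :=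
        mul_le_mul_of_nonneg_left (by linarith) hp.le
    _ = β * (p * (log p - log s)) := by ring

/-- training distribution shift upper bound: with test pmf `p_Ts`, a
dissimilar pmf `s` (positive on the support of `p_Ts`), mixing proportion `β ∈ [0,1]`,
training pmf `p_Tr = (1−β)p_Ts + βs`, and perfect training
(`q(y|x) = p_Tr(x,y)/p_Tr(x)`), the test log-loss `L` satisfies
`L − H(p_Ts(y|x)) ≤ β·KL(p_Ts ‖ s)`; in particular the upper bound
`β ↦ β·KL(p_Ts ‖ s)` is monotone non-decreasing in `β` on `[0,1]`. -/
theorem stmt_11 {X Y : Type*} [Fintype X] [Fintype Y]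
    (pTs s : X → Y → ℝ)
    (hp0 : ∀ x y, 0 ≤ pTs x y) (hp1 : ∑ x, ∑ y, pTs x y = 1)
    (hs0 : ∀ x y, 0 ≤ s x y) (hs1 : ∑ x, ∑ y, s x y = 1)
    (hsp : ∀ x y, 0 < pTs x y → 0 < s x y)
    (β : ℝ) (hβ : β ∈ Set.Icc (0 : ℝ) 1) :
    let pTr : X → Y → ℝ := fun x y => (1 - β) * pTs x y + β * s x y
    let L : ℝ := -∑ x, ∑ y, pTs x y * Real.log (pTr x y / ∑ y', pTr x y')
    let H : ℝ := -∑ x, ∑ y, pTs x y * Real.log (pTs x y / ∑ y', pTs x y')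
    let KL : ℝ := ∑ x, ∑ y, pTs x y * Real.log (pTs x y / s x y)
    L - H ≤ β * KL ∧ MonotoneOn (fun b : ℝ => b * KL) (Set.Icc (0 : ℝ) 1) := by
  intro pTr L H KL
  have hr0 : ∀ x y, 0 ≤ pTr x y := fun x y =>
    add_nonneg (mul_nonneg (sub_nonneg.2 hβ.2) (hp0 x y)) (mul_nonneg hβ.1 (hs0 x y))
  have hpr : ∀ x y, 0 < pTs x y → 0 < pTr x y := fun x y h => mix_pos h (hsp x y h) hβ
  have hr1 : ∑ x, ∑ y, pTr x y = 1 := by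
    simp only [pTr, sum_add_distrib, ← mul_sum, hp1, hs1]; ring
  have hKL : 0 ≤ KL := by
    have := (univ : Finset (X × Y)).sum_sub_sum_le_sum_mul_log_div
      (fun z _ => hp0 z.1 z.2) (fun z _ => hs0 z.1 z.2) (fun z _ => hsp z.1 z.2)
    rwa [Fintype.sum_prod_type', Fintype.sum_prod_type', hp1, hs1, sub_self,
      Fintype.sum_prod_type' fun x y => pTs x y * log (pTs x y / s x y)] at this
  have hmarginal : 0 ≤ ∑ x, (∑ y, pTs x y) * log ((∑ y, pTs x y) / ∑ y, pTr x y) := by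
    have := univ.sum_sub_sum_le_sum_mul_log_div (fun x _ => sum_nonneg fun y _ => hp0 x y)
      (fun x _ => sum_nonneg fun y _ => hr0 x y)
      (fun x _ => univ.sum_pos_of_pos_imp_pos (fun y _ => hr0 x y) fun y _ => hpr x y)
    rwa [hp1, hr1, sub_self] at this
  have hmix : ∑ x, ∑ y, pTs x y * log (pTs x y / pTr x y) ≤ β * KL := by
    simp only [KL, mul_sum]
    exact sum_le_sum fun x _ => sum_le_sum fun y _ => mul_log_div_mix_le (hp0 x y) (hsp x y) hβ
  refine ⟨?_, fun a _ b _ hab => mul_le_mul_of_nonneg_right hab hKL⟩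
  calc L - H = ∑ x, (∑ y, pTs x y * log (pTs x y / ∑ y', pTs x y') -
        ∑ y, pTs x y * log (pTr x y / ∑ y', pTr x y')) := by
        simp only [L, H, sum_sub_distrib]; ring
    _ = ∑ x, ∑ y, pTs x y * log (pTs x y / pTr x y) -
        ∑ x, (∑ y, pTs x y) * log ((∑ y, pTs x y) / ∑ y, pTr x y) := by
        rw [← sum_sub_distrib]
        exact sum_congr rfl fun x _ => univ.sum_mul_log_div_sum_sub_sum_mul_log_div_sum
          (fun y _ => hp0 x y) (fun y _ => hr0 x y) fun y _ => hpr x y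
    _ ≤ β * KL := by linarith
end

section
/- Let θ_1, …, θ_n ∈ ℝ satisfy TV(θ_{1:n}) = Σ_{t=2}^n |θ_t − θ_{t−1}| ≤ C, let σ > 0, and suppose {1, …, n} is partitioned into M consecutive intervals [1_s, 1_t], …, [M_s, M_t] (with i_s = (i−1)_t + 1) of lengths n_i = i_t − i_s + 1 such that for every i, Σ_{t=i_s+1}^{i_t} |θ_t − θ_{t−1}| ≤ σ/√(n_i), and for every i < M, Σ_{t=i_s+1}^{i_t+1} |θ_t − θ_{t−1}| > σ/√(n_i + 1). Then M ≤ max( 1, 4^{2/3}·n^{1/3}·C^{2/3}·σ^{−2/3} ). -/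
/-!
Write `K = M - 1`. Extending each of the first `K` bins by one point gives disjoint windows inside
`{2, …, n}`, so `σ ∑_{i<K} (n_i + 1)^{-1/2} ≤ C`. Hölder's inequality
`K³ ≤ (∑ aᵢ) (∑ aᵢ^{-1/2})²` with `∑_{i<K} (n_i + 1) ≤ 2n` turns this into `σ² K³ ≤ 2 n C²`,
and `M ≤ 2K` gives `σ² M³ ≤ 16 n C²`.
-/

open Finset

theorem Finset.card_pow_three_le_sum_mul_sq_sum_inv_sqrt {ι : Type*} (s : Finset ι) {a : ι → ℝ}
    (ha : ∀ i ∈ s, 0 < a i) :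
    (#s : ℝ) ^ 3 ≤ (∑ i ∈ s, a i) * (∑ i ∈ s, 1 / √(a i)) ^ 2 := by
  rcases s.eq_empty_or_nonempty with rfl | hs
  · simp
  have hroot : 0 < ∑ i ∈ s, √(a i) := sum_pos (fun i hi => Real.sqrt_pos.2 (ha i hi)) hs
  have hcard : (0 : ℝ) < #s := by exact_mod_cast hs.card_pos
  have hsedrakyan : (#s : ℝ) ^ 2 ≤ (∑ i ∈ s, √(a i)) * ∑ i ∈ s, 1 / √(a i) := by
    have := sq_sum_div_le_sum_sq_div s (fun _ => (1 : ℝ)) fun i hi => Real.sqrt_pos.2 (ha i hi)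
    simp only [sum_const, nsmul_eq_mul, mul_one, one_pow] at this
    rwa [div_le_iff₀' hroot] at this
  have hsqrt_sum : (∑ i ∈ s, √(a i)) ^ 2 ≤ #s * ∑ i ∈ s, a i := by
    have := sq_sum_le_card_mul_sum_sq (s := s) (f := fun i => √(a i))
    rwa [sum_congr rfl fun i hi => Real.sq_sqrt (ha i hi).le] at this
  have hcube : (#s : ℝ) * #s ^ 3 ≤ #s * ((∑ i ∈ s, a i) * (∑ i ∈ s, 1 / √(a i)) ^ 2) :=
    calc (#s : ℝ) * #s ^ 3 = ((#s : ℝ) ^ 2) ^ 2 := by ring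
      _ ≤ ((∑ i ∈ s, √(a i)) * ∑ i ∈ s, 1 / √(a i)) ^ 2 := by gcongr
      _ = (∑ i ∈ s, √(a i)) ^ 2 * (∑ i ∈ s, 1 / √(a i)) ^ 2 := by ring
      _ ≤ (#s * ∑ i ∈ s, a i) * (∑ i ∈ s, 1 / √(a i)) ^ 2 := by gcongr
      _ = _ := by ring
  exact le_of_mul_le_mul_left hcube hcard

theorem Finset.sum_range_sum_Ioc_consecutive {M : Type*} [AddCommMonoid M] (f : ℕ → M)
    {c : ℕ → ℕ} {K : ℕ} (hc : MonotoneOn c (Set.Iic K)) :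
    ∑ i ∈ range K, ∑ t ∈ Ioc (c i) (c (i + 1)), f t = ∑ t ∈ Ioc (c 0) (c K), f t := by
  induction K with
  | zero => simp
  | succ K ih =>
    have hK : c K ≤ c (K + 1) := hc (by simp) (by simp) K.le_succ
    rw [sum_range_succ, ih (hc.mono (Set.Iic_subset_Iic.2 K.le_succ)),
      sum_Ioc_consecutive _ (hc (by simp) (by simp) (Nat.zero_le K)) hK]

theorem le_four_rpow_mul_rpow_of_sq_mul_pow_three_le {x n C σ : ℝ} (hn : 0 ≤ n) (hC : 0 ≤ C)
    (hσ : 0 < σ) (h : σ ^ 2 * x ^ 3 ≤ 16 * n * C ^ 2) :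
    x ≤ (4 : ℝ) ^ ((2 : ℝ) / 3) * n ^ ((1 : ℝ) / 3) * C ^ ((2 : ℝ) / 3) * σ ^ (-(2 : ℝ) / 3) := by
  have cube {z : ℝ} (hz : 0 ≤ z) (r : ℝ) : (z ^ r) ^ 3 = z ^ (r * 3) := by
    rw [← Real.rpow_mul_natCast hz]; norm_num
  refine le_of_pow_le_pow_left₀ three_ne_zero (by positivity) ?_
  calc x ^ 3 ≤ 16 * n * C ^ 2 / σ ^ 2 := by rwa [le_div_iff₀' (by positivity)]
    _ = _ := by
      rw [mul_pow, mul_pow, mul_pow, cube (by norm_num), cube hn, cube hC, cube hσ.le]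
      norm_num [Real.rpow_neg hσ.le, Real.rpow_two, div_eq_mul_inv]

theorem sq_mul_pow_three_le_of_bins {f : ℕ → ℝ} (hf : ∀ t, 0 ≤ f t) {n K : ℕ} {C σ : ℝ}
    (hσ : 0 < σ) {b : ℕ → ℕ} (hb : StrictMonoOn b (Set.Iic K)) (hbn : b K < n)
    (hTV : ∑ t ∈ Icc 2 n, f t ≤ C)
    (hbin : ∀ i < K,
      σ / √((b (i + 1) : ℝ) - b i + 1) ≤ ∑ t ∈ Icc (b i + 2) (b (i + 1) + 1), f t) :
    σ ^ 2 * K ^ 3 ≤ 2 * n * C ^ 2 := by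
  set L : ℕ → ℝ := fun i => (b (i + 1) : ℝ) - b i + 1 with hL_def
  have hstep : ∀ i < K, b i < b (i + 1) := fun i hi =>
    hb (Set.mem_Iic.2 hi.le) (Set.mem_Iic.2 hi) i.lt_succ_self
  have hL : ∀ i ∈ range K, 0 < L i := fun i hi => by
    have : (b i : ℝ) < b (i + 1) := by exact_mod_cast hstep i (mem_range.1 hi)
    simp only [hL_def]; linarith
  have hsumL : ∑ i ∈ range K, L i ≤ 2 * n := by
    have hK : K ≤ b K := hb.Iic_id_le K le_rfl
    simp only [hL_def, sum_add_distrib, sum_range_sub (fun i => (b i : ℝ)), sum_const, card_range,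
      nsmul_eq_mul, mul_one]
    have : (b K : ℝ) + K ≤ 2 * n := by exact_mod_cast (by omega : b K + K ≤ 2 * n)
    have : (0 : ℝ) ≤ b 0 := by positivity
    linarith
  have hsumf : σ * ∑ i ∈ range K, 1 / √(L i) ≤ C :=
    calc σ * ∑ i ∈ range K, 1 / √(L i) = ∑ i ∈ range K, σ / √(L i) := by
          simp only [mul_sum, mul_one_div]
      _ ≤ ∑ i ∈ range K, ∑ t ∈ Ioc (b i + 1) (b (i + 1) + 1), f t :=
          sum_le_sum fun i hi => by
            rw [← Icc_add_one_left_eq_Ioc]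
            exact hbin i (mem_range.1 hi)
      _ = ∑ t ∈ Ioc (b 0 + 1) (b K + 1), f t :=
          sum_range_sum_Ioc_consecutive f fun i hi j hj hij => by
            simpa using hb.monotoneOn hi hj hij
      _ ≤ ∑ t ∈ Icc 2 n, f t := by
          refine sum_le_sum_of_subset_of_nonneg (fun t ht => ?_) fun t _ _ => hf t
          simp only [mem_Ioc, mem_Icc] at ht ⊢
          omega
      _ ≤ C := hTV
  calc σ ^ 2 * K ^ 3 ≤ σ ^ 2 * ((∑ i ∈ range K, L i) * (∑ i ∈ range K, 1 / √(L i)) ^ 2) := by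
        gcongr; simpa using card_pow_three_le_sum_mul_sq_sum_inv_sqrt (range K) hL
    _ = (∑ i ∈ range K, L i) * (σ * ∑ i ∈ range K, 1 / √(L i)) ^ 2 := by ring
    _ ≤ 2 * n * C ^ 2 := by
        have : 0 ≤ σ * ∑ i ∈ range K, 1 / √(L i) := by positivity
        gcongr

theorem stmt_14_general (n : ℕ) (θ : ℕ → ℝ) (C σ : ℝ) (hσ : 0 < σ)
    (hTV : ∑ t ∈ Finset.Icc 2 n, |θ t - θ (t - 1)| ≤ C)
    (M : ℕ) (b : ℕ → ℕ)
    (hbM : b M = n)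
    (hmono : ∀ i < M, b i < b (i + 1))
    (hbin2 : ∀ i, i + 1 < M →
      σ / Real.sqrt (((b (i + 1) : ℝ) - b i) + 1) <
        ∑ t ∈ Finset.Icc (b i + 2) (b (i + 1) + 1), |θ t - θ (t - 1)|) :
    (M : ℝ) ≤ max 1
      ((4 : ℝ) ^ ((2 : ℝ) / 3) * (n : ℝ) ^ ((1 : ℝ) / 3) * C ^ ((2 : ℝ) / 3) *
        σ ^ (-(2 : ℝ) / 3)) := by
  rcases le_or_gt M 1 with hM | hM
  · exact le_max_of_le_left (by exact_mod_cast hM)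
  obtain ⟨K, rfl⟩ : ∃ K, M = K + 1 := ⟨M - 1, by omega⟩
  have hb : StrictMonoOn b (Set.Iic (K + 1)) := strictMonoOn_Iic_of_lt_succ hmono
  have hC : 0 ≤ C := (sum_nonneg fun t _ => abs_nonneg _).trans hTV
  have hbins : σ ^ 2 * K ^ 3 ≤ 2 * n * C ^ 2 :=
    sq_mul_pow_three_le_of_bins (fun t => abs_nonneg _) hσ
      (hb.mono (Set.Iic_subset_Iic.2 K.le_succ)) (hbM ▸ hmono K K.lt_succ_self) hTV
      fun i hi => (hbin2 i (by omega)).le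
  have hMK : ((K + 1 : ℕ) : ℝ) ≤ 2 * K := by exact_mod_cast (by omega : K + 1 ≤ 2 * K)
  refine le_max_of_le_right (le_four_rpow_mul_rpow_of_sq_mul_pow_three_le n.cast_nonneg hC hσ ?_)
  calc σ ^ 2 * ((K + 1 : ℕ) : ℝ) ^ 3 ≤ σ ^ 2 * (2 * K) ^ 3 := by gcongr
    _ = 8 * (σ ^ 2 * K ^ 3) := by ring
    _ ≤ 16 * n * C ^ 2 := by linarith

/-- bin-counting step of Theorem `thm:tv`: suppose `{1,…,n}` is
partitioned into `M` consecutive bins `[b i + 1, b (i+1)]` (so `i_s = b i + 1`,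
`i_t = b (i+1)`, bin length `n_i = b (i+1) − b i`) such that every bin has internal
total variation at most `σ/√(n_i)` while every bin except the last stops being so
stable when extended by one point (`Σ_{t=i_s+1}^{i_t+1} |θ_t − θ_{t−1}| > σ/√(n_i+1)`).
If the total variation of `θ_{1:n}` is at most `C`, then
`M ≤ max(1, 4^{2/3}·n^{1/3}·C^{2/3}·σ^{−2/3})`. -/
theorem stmt_14 (n : ℕ) (θ : ℕ → ℝ) (C σ : ℝ) (hσ : 0 < σ)
    (hTV : ∑ t ∈ Finset.Icc 2 n, |θ t - θ (t - 1)| ≤ C)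
    (M : ℕ) (hM : 0 < M) (b : ℕ → ℕ)
    (hb0 : b 0 = 0) (hbM : b M = n)
    (hmono : ∀ i < M, b i < b (i + 1))
    (hbin : ∀ i < M,
      ∑ t ∈ Finset.Icc (b i + 2) (b (i + 1)), |θ t - θ (t - 1)| ≤
        σ / Real.sqrt ((b (i + 1) : ℝ) - b i))
    (hbin2 : ∀ i, i + 1 < M →
      σ / Real.sqrt (((b (i + 1) : ℝ) - b i) + 1) <
        ∑ t ∈ Finset.Icc (b i + 2) (b (i + 1) + 1), |θ t - θ (t - 1)|) :
    (M : ℝ) ≤ max 1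
      ((4 : ℝ) ^ ((2 : ℝ) / 3) * (n : ℝ) ^ ((1 : ℝ) / 3) * C ^ ((2 : ℝ) / 3) *
        σ ^ (-(2 : ℝ) / 3)) :=
  stmt_14_general n θ C σ hσ hTV M b hbM hmono hbin2
end

section
/- Let θ_1, …, θ_n ∈ ℝ satisfy Σ_{t=2}^n |θ_t − θ_{t−1}| ≤ C, let σ > 0 and κ ≥ 1, and for each time t let θ̄^{(t)}_{s} = (θ_t + θ_{t−1} + … + θ_{t−s+1})/s denote the backward average of length s ≤ t, S(r) = {1, 2, 4, …, 2^{⌊log₂ r⌋}}, and U_t(r) = max( max_{s ∈ S(r)} |θ̄^{(t)}_{s} − θ_t|, σ/√r ). Suppose estimates θ̂_1, …, θ̂_n satisfy the point-wise guarantee |θ̂_t − θ_t| ≤ κ·min_{r ∈ {1, …, t}} U_t(r) for every t ∈ {1, …, n}. Then the squared-error risk satisfies Σ_{t=1}^n (θ̂_t − θ_t)² ≤ κ²·σ²·(1 + log n)·max( 1, 4^{2/3}·n^{1/3}·C^{2/3}·σ^{−2/3} ); in particular Σ_{t=1}^n (θ̂_t − θ_t)² = O( κ²·log n·( n^{1/3}·C^{2/3}·σ^{4/3}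 + σ² ) ), matching the minimax rate for total-variation denoising up to logarithmic factors. -/
/-!
If the total variation `V` of `θ` on a window `[t - r + 1, t]` satisfies `V² ≤ σ²/r`, every
dyadic backward average over the window deviates from `θ_t` by at most `V ≤ σ/√r`, so the
point-wise guarantee gives `(θ̂_t - θ_t)² ≤ κ²σ²/r`. Write `E = 4^{2/3} n^{1/3} C^{2/3} σ^{-2/3}`,
so that `E³ = 16nC²/σ²`. If `nC² ≤ σ²`, the whole prefix `[1, t]` is such a window and the
harmonic sum gives `κ²σ²(1 + log n)`; if `n ≤ (1 + log n)E`, windows of length one suffice.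
Otherwise cut `[1, n]` into at most `C/τ + 1` blocks of variation below `τ` and let each time
look back to the start of its block, but no further than `R ≈ σ²/τ²`: each block contributes at
most a harmonic sum and the cap costs `n/R`.
-/

open Finset Real

def localTV (θ : ℕ → ℝ) (a b : ℕ) : ℝ := ∑ u ∈ Ico a b, |θ (u + 1) - θ u|

section localTV

variable (θ : ℕ → ℝ) {a b c : ℕ}

lemma localTV_nonneg : 0 ≤ localTV θ a b :=
  sum_nonneg fun _ _ => abs_nonneg _

@[simp] lemma localTV_self : localTV θ a a = 0 := by
  simp [localTV]

lemma localTV_mono {a' b' : ℕ} (ha : a' ≤ a) (hb : b ≤ b') : localTV θ a b ≤ localTV θ a' b' :=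
  sum_le_sum_of_subset_of_nonneg (Ico_subset_Ico ha hb) fun _ _ _ => abs_nonneg _

lemma localTV_add (hab : a ≤ b) (hbc : b ≤ c) :
    localTV θ a b + localTV θ b c = localTV θ a c :=
  sum_Ico_consecutive _ hab hbc

lemma abs_sub_le_localTV (hab : a ≤ b) : |θ b - θ a| ≤ localTV θ a b := by
  have h := dist_le_Ico_sum_dist θ hab
  simp only [Real.dist_eq] at h
  rw [abs_sub_comm, localTV]
  simpa only [abs_sub_comm (θ _) (θ (_ + 1))] using h

lemma sum_Icc_two_eq_localTV (n : ℕ) :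
    ∑ t ∈ Icc 2 n, |θ t - θ (t - 1)| = localTV θ 1 n := by
  rw [localTV, ← Ico_add_one_right_eq_Icc, ← sum_Ico_add' (fun u => |θ u - θ (u - 1)|) 1 n 1]
  simp

end localTV

lemma abs_sum_div_card_sub_le {ι : Type*} {s : Finset ι} (hs : s.Nonempty) {f : ι → ℝ} {c M : ℝ}
    (h : ∀ i ∈ s, |f i - c| ≤ M) : |(∑ i ∈ s, f i) / #s - c| ≤ M := by
  have hcard : (0 : ℝ) < #s := by exact_mod_cast hs.card_pos
  have hmean : (∑ i ∈ s, f i) / #s - c = (∑ i ∈ s, (f i - c)) / #s := by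
    rw [sum_sub_distrib, sum_const, nsmul_eq_mul]
    field_simp
  rw [hmean, abs_div, abs_of_pos hcard, div_le_iff₀ hcard]
  calc |∑ i ∈ s, (f i - c)| ≤ ∑ i ∈ s, |f i - c| := abs_sum_le_sum_abs _ _
    _ ≤ ∑ _i ∈ s, M := sum_le_sum h
    _ = M * #s := by rw [sum_const, nsmul_eq_mul, mul_comm]

lemma abs_window_mean_sub_le_localTV (θ : ℕ → ℝ) {s t : ℕ} (hs : 1 ≤ s) (hst : s ≤ t) :
    |(∑ u ∈ Icc (t - s + 1) t, θ u) / s - θ t| ≤ localTV θ (t - s + 1) t := by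
  have hcard : #(Icc (t - s + 1) t) = s := by rw [Nat.card_Icc]; omega
  have hne : (Icc (t - s + 1) t).Nonempty := nonempty_Icc.mpr (by omega)
  have h := abs_sum_div_card_sub_le (f := θ) (c := θ t) hne fun u hu => by
    rw [mem_Icc] at hu
    rw [abs_sub_comm]
    exact (abs_sub_le_localTV θ hu.2).trans (localTV_mono θ hu.1 le_rfl)
  rwa [hcard] at h

noncomputable def dyadicBias (θ : ℕ → ℝ) (t r : ℕ) : ℝ :=
  (range (Nat.log 2 r + 1)).sup' (nonempty_range_iff.mpr (Nat.succ_ne_zero _))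
    (fun i => |(∑ u ∈ Icc (t - 2 ^ i + 1) t, θ u) / (2 ^ i : ℝ) - θ t|)

lemma dyadicBias_le_localTV (θ : ℕ → ℝ) {t r : ℕ} (hr : 1 ≤ r) (hrt : r ≤ t) :
    dyadicBias θ t r ≤ localTV θ (t - r + 1) t := by
  refine sup'_le _ _ fun i hi => ?_
  have hir : 2 ^ i ≤ r :=
    (Nat.pow_le_pow_right two_pos (Nat.lt_succ_iff.mp (mem_range.mp hi))).trans
      (Nat.pow_log_le_self 2 (by omega))
  have h := abs_window_mean_sub_le_localTV θ (Nat.one_le_two_pow) (hir.trans hrt)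
  push_cast at h
  exact h.trans (localTV_mono θ (by omega) le_rfl)

lemma sq_sub_le_of_localTV_sq_le (θ : ℕ → ℝ) {x σ κ : ℝ} {t r : ℕ} (hσ : 0 ≤ σ)
    (hr : 1 ≤ r) (hrt : r ≤ t)
    (hx : |x - θ t| ≤ κ * max (dyadicBias θ t r) (σ / √r))
    (hV : localTV θ (t - r + 1) t ^ 2 ≤ σ ^ 2 / r) :
    (x - θ t) ^ 2 ≤ κ ^ 2 * σ ^ 2 / r := by
  have hV' : localTV θ (t - r + 1) t ≤ σ / √r := by
    rw [← Real.sqrt_sq hσ, ← Real.sqrt_div' _ (Nat.cast_nonneg r)]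
    exact Real.le_sqrt_of_sq_le hV
  rw [max_eq_right ((dyadicBias_le_localTV θ hr hrt).trans hV')] at hx
  calc (x - θ t) ^ 2 = |x - θ t| ^ 2 := (sq_abs _).symm
    _ ≤ (κ * (σ / √r)) ^ 2 := pow_le_pow_left₀ (abs_nonneg _) hx 2
    _ = κ ^ 2 * σ ^ 2 / r := by
        rw [mul_pow, div_pow, Real.sq_sqrt (Nat.cast_nonneg r), mul_div_assoc]

lemma sum_Icc_inv_le_one_add_log (n : ℕ) : ∑ t ∈ Icc 1 n, (t : ℝ)⁻¹ ≤ 1 + log n := by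
  simpa only [harmonic_eq_sum_Icc, Rat.cast_sum, Rat.cast_inv, Rat.cast_natCast]
    using harmonic_le_one_add_log n

noncomputable def levelStart (k : ℕ → ℕ) (t : ℕ) : ℕ := sInf {m | 1 ≤ m ∧ k m = k t}

section levelStart

variable (k : ℕ → ℕ) {t : ℕ}

lemma one_le_levelStart_and_apply (ht : 1 ≤ t) :
    1 ≤ levelStart k t ∧ k (levelStart k t) = k t :=
  Nat.sInf_mem (⟨t, ht, rfl⟩ : {m | 1 ≤ m ∧ k m = k t}.Nonempty)

lemma levelStart_le (ht : 1 ≤ t) : levelStart k t ≤ t :=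
  Nat.sInf_le ⟨ht, rfl⟩

lemma levelStart_congr {s : ℕ} (h : k s = k t) : levelStart k s = levelStart k t := by
  simp only [levelStart, h]

/-- `t ↦ (k t, t - levelStart k t + 1)` is injective, so the sum is at most one harmonic sum
per level. -/
lemma sum_inv_sub_levelStart_le {n K : ℕ} (hk : ∀ t ∈ Icc 1 n, k t ≤ K) :
    ∑ t ∈ Icc 1 n, ((t - levelStart k t + 1 : ℕ) : ℝ)⁻¹ ≤ (K + 1) * (1 + log n) := by
  set f : ℕ → ℕ × ℕ := fun t => (k t, t - levelStart k t + 1)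
  have hinj : Set.InjOn f (Icc 1 n) := by
    intro x hx y hy hxy
    simp only [coe_Icc, Set.mem_Icc, f, Prod.mk.injEq] at hx hy hxy
    have := levelStart_congr k hxy.1
    have := levelStart_le k hx.1
    have := levelStart_le k hy.1
    omega
  have hsub : (Icc 1 n).image f ⊆ range (K + 1) ×ˢ Icc 1 n := by
    intro p hp
    obtain ⟨t, ht, rfl⟩ := mem_image.mp hp
    have := levelStart_le k (mem_Icc.mp ht).1
    have := (one_le_levelStart_and_apply k (mem_Icc.mp ht).1).1
    simp only [mem_product, mem_range, mem_Icc, f] at ht ⊢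
    exact ⟨Nat.lt_succ_of_le (hk t (mem_Icc.mpr ht)), by omega, by omega⟩
  calc ∑ t ∈ Icc 1 n, ((t - levelStart k t + 1 : ℕ) : ℝ)⁻¹
      = ∑ p ∈ (Icc 1 n).image f, (p.2 : ℝ)⁻¹ :=
        (sum_image (f := fun p => (p.2 : ℝ)⁻¹) hinj).symm
    _ ≤ ∑ p ∈ range (K + 1) ×ˢ Icc 1 n, (p.2 : ℝ)⁻¹ :=
        sum_le_sum_of_subset_of_nonneg hsub fun _ _ _ => by positivity
    _ = (K + 1) * ∑ j ∈ Icc 1 n, (j : ℝ)⁻¹ := by simp [sum_product]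
    _ ≤ (K + 1) * (1 + log n) := by gcongr; exact sum_Icc_inv_le_one_add_log n

end levelStart

lemma sub_lt_of_floor_div_eq {x y τ : ℝ} (hτ : 0 < τ) (hx : 0 ≤ x)
    (h : ⌊x / τ⌋₊ = ⌊y / τ⌋₊) : y - x < τ := by
  have hy : y / τ < ⌊x / τ⌋₊ + 1 := h ▸ Nat.lt_floor_add_one _
  have hx' : (⌊x / τ⌋₊ : ℝ) ≤ x / τ := Nat.floor_le (div_nonneg hx hτ.le)
  have : y / τ < x / τ + 1 := by linarith
  rw [div_lt_iff₀ hτ, add_mul, div_mul_cancel₀ _ hτ.ne', one_mul] at this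
  linarith

lemma localTV_levelStart_lt (θ : ℕ → ℝ) {τ : ℝ} (hτ : 0 < τ) {t : ℕ} (ht : 1 ≤ t) :
    localTV θ (levelStart (fun s => ⌊localTV θ 1 s / τ⌋₊) t) t < τ := by
  set k : ℕ → ℕ := fun s => ⌊localTV θ 1 s / τ⌋₊
  obtain ⟨ha1, hak⟩ := one_le_levelStart_and_apply k ht
  have hsplit := localTV_add θ ha1 (levelStart_le k ht)
  have hgap := sub_lt_of_floor_div_eq hτ (localTV_nonneg θ) hak
  linarith

lemma inv_min_le_inv_add_inv (m R : ℕ) : ((min m R : ℕ) : ℝ)⁻¹ ≤ (m : ℝ)⁻¹ + (R : ℝ)⁻¹ := by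
  rcases le_total m R with h | h
  · rw [min_eq_left h]; linarith [inv_nonneg.mpr (Nat.cast_nonneg (α := ℝ) R)]
  · rw [min_eq_right h]; linarith [inv_nonneg.mpr (Nat.cast_nonneg (α := ℝ) m)]

section Risk

variable {n : ℕ} {θ θhat : ℕ → ℝ} {C σ κ : ℝ}

lemma sum_sq_le_of_windows (hσ : 0 ≤ σ)
    (hpt : ∀ t ∈ Icc 1 n, ∀ r ∈ Icc 1 t, |θhat t - θ t| ≤ κ * max (dyadicBias θ t r) (σ / √r))
    (r : ℕ → ℕ) (hr : ∀ t ∈ Icc 1 n, r t ∈ Icc 1 t ∧ localTV θ (t - r t + 1) t ^ 2 ≤ σ ^ 2 / r t) :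
    ∑ t ∈ Icc 1 n, (θhat t - θ t) ^ 2 ≤ κ ^ 2 * σ ^ 2 * ∑ t ∈ Icc 1 n, (r t : ℝ)⁻¹ := by
  rw [mul_sum]
  refine sum_le_sum fun t ht => ?_
  obtain ⟨hrt, hV⟩ := hr t ht
  rw [mem_Icc] at hrt
  exact (sq_sub_le_of_localTV_sq_le θ hσ hrt.1 hrt.2 (hpt t ht _ (mem_Icc.mpr hrt)) hV).trans_eq
    (div_eq_mul_inv _ _)

lemma sum_sq_le_of_mul_sq_le (hσ : 0 ≤ σ)
    (hpt : ∀ t ∈ Icc 1 n, ∀ r ∈ Icc 1 t, |θhat t - θ t| ≤ κ * max (dyadicBias θ t r) (σ / √r))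
    (hTV : localTV θ 1 n ≤ C) (hsmall : n * C ^ 2 ≤ σ ^ 2) :
    ∑ t ∈ Icc 1 n, (θhat t - θ t) ^ 2 ≤ κ ^ 2 * σ ^ 2 * (1 + log n) := by
  refine (sum_sq_le_of_windows hσ hpt id fun t ht => ⟨?_, ?_⟩).trans
    (by gcongr; exact sum_Icc_inv_le_one_add_log n)
  · simpa using (mem_Icc.mp ht).1
  rw [mem_Icc] at ht
  have ht0 : (0 : ℝ) < t := by exact_mod_cast ht.1
  have htn : (t : ℝ) ≤ n := by exact_mod_cast ht.2
  have hV : localTV θ 1 t ≤ C := (localTV_mono θ le_rfl ht.2).trans hTV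
  simp only [id, Nat.sub_self, zero_add]
  rw [le_div_iff₀ ht0]
  calc localTV θ 1 t ^ 2 * t ≤ C ^ 2 * n :=
        mul_le_mul (pow_le_pow_left₀ (localTV_nonneg θ) hV 2) htn ht0.le (sq_nonneg C)
    _ ≤ σ ^ 2 := by linarith

lemma sum_sq_le_card (hσ : 0 ≤ σ)
    (hpt : ∀ t ∈ Icc 1 n, ∀ r ∈ Icc 1 t, |θhat t - θ t| ≤ κ * max (dyadicBias θ t r) (σ / √r)) :
    ∑ t ∈ Icc 1 n, (θhat t - θ t) ^ 2 ≤ κ ^ 2 * σ ^ 2 * n := by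
  refine (sum_sq_le_of_windows hσ hpt (fun _ => 1) fun t ht => ⟨?_, ?_⟩).trans_eq (by simp)
  · simpa using (mem_Icc.mp ht).1
  · rw [Nat.sub_add_cancel (mem_Icc.mp ht).1, localTV_self]
    simpa using sq_nonneg σ

/-- Each time `t` looks back to the start of its level of `⌊localTV θ 1 · / τ⌋₊`, but at most
`R` steps. -/
lemma sum_sq_le_of_threshold (hσ : 0 ≤ σ)
    (hpt : ∀ t ∈ Icc 1 n, ∀ r ∈ Icc 1 t, |θhat t - θ t| ≤ κ * max (dyadicBias θ t r) (σ / √r))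
    (hTV : localTV θ 1 n ≤ C) {τ : ℝ} (hτ : 0 < τ) {R : ℕ} (hR : 1 ≤ R)
    (hRτ : R * τ ^ 2 ≤ σ ^ 2) :
    ∑ t ∈ Icc 1 n, (θhat t - θ t) ^ 2 ≤ κ ^ 2 * σ ^ 2 * ((C / τ + 1) * (1 + log n) + n / R) := by
  set k : ℕ → ℕ := fun s => ⌊localTV θ 1 s / τ⌋₊
  set r : ℕ → ℕ := fun t => min (t - levelStart k t + 1) R
  have hwindow : ∀ t ∈ Icc 1 n, r t ∈ Icc 1 t ∧ localTV θ (t - r t + 1) t ^ 2 ≤ σ ^ 2 / r t := by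
    intro t ht
    have ha1 := (one_le_levelStart_and_apply k (mem_Icc.mp ht).1).1
    have hat := levelStart_le k (mem_Icc.mp ht).1
    have hrt : r t ≤ t - levelStart k t + 1 := min_le_left _ _
    have hr1 : 1 ≤ r t := le_min (by omega) hR
    have hrR : (r t : ℝ) ≤ R := by exact_mod_cast min_le_right _ _
    have hblock : localTV θ (levelStart k t) t < τ := localTV_levelStart_lt θ hτ (mem_Icc.mp ht).1
    have hV : localTV θ (t - r t + 1) t < τ := (localTV_mono θ (by omega) le_rfl).trans_lt hblock
    refine ⟨mem_Icc.mpr ⟨hr1, by omega⟩, ?_⟩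
    rw [le_div_iff₀ (by exact_mod_cast hr1)]
    calc localTV θ (t - r t + 1) t ^ 2 * r t ≤ τ ^ 2 * R :=
          mul_le_mul (pow_le_pow_left₀ (localTV_nonneg θ) hV.le 2) hrR (Nat.cast_nonneg _)
            (sq_nonneg τ)
      _ ≤ σ ^ 2 := by linarith
  have hC : 0 ≤ C := (localTV_nonneg θ).trans hTV
  have hk : ∀ t ∈ Icc 1 n, k t ≤ ⌊C / τ⌋₊ := fun t ht =>
    Nat.floor_le_floor (div_le_div_of_nonneg_right
      ((localTV_mono θ le_rfl (mem_Icc.mp ht).2).trans hTV) hτ.le)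
  calc ∑ t ∈ Icc 1 n, (θhat t - θ t) ^ 2 ≤ κ ^ 2 * σ ^ 2 * ∑ t ∈ Icc 1 n, (r t : ℝ)⁻¹ :=
        sum_sq_le_of_windows hσ hpt r hwindow
    _ ≤ κ ^ 2 * σ ^ 2 * ∑ t ∈ Icc 1 n, (((t - levelStart k t + 1 : ℕ) : ℝ)⁻¹ + (R : ℝ)⁻¹) := by
        gcongr with t; exact inv_min_le_inv_add_inv _ _
    _ = κ ^ 2 * σ ^ 2 * (∑ t ∈ Icc 1 n, ((t - levelStart k t + 1 : ℕ) : ℝ)⁻¹ + n / R) := by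
        rw [sum_add_distrib, sum_const, Nat.card_Icc, nsmul_eq_mul, Nat.add_sub_cancel,
          div_eq_mul_inv]
    _ ≤ κ ^ 2 * σ ^ 2 * ((⌊C / τ⌋₊ + 1) * (1 + log n) + n / R) := by
        gcongr; exact sum_inv_sub_levelStart_le k hk
    _ ≤ κ ^ 2 * σ ^ 2 * ((C / τ + 1) * (1 + log n) + n / R) := by
        gcongr; exact Nat.floor_le (by positivity)

end Risk

lemma rpow_div_three_pow_three {x : ℝ} (hx : 0 ≤ x) (p : ℝ) : (x ^ (p / 3)) ^ 3 = x ^ p := by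
  rw [← Real.rpow_natCast, ← Real.rpow_mul hx]
  norm_num

lemma rate_pow_three {n C σ : ℝ} (hn : 0 ≤ n) (hC : 0 ≤ C) (hσ : 0 < σ) :
    ((4 : ℝ) ^ ((2 : ℝ) / 3) * n ^ ((1 : ℝ) / 3) * C ^ ((2 : ℝ) / 3) * σ ^ (-(2 : ℝ) / 3)) ^ 3 =
      16 * n * C ^ 2 / σ ^ 2 := by
  simp only [mul_pow, rpow_div_three_pow_three (by norm_num : (0 : ℝ) ≤ 4),
    rpow_div_three_pow_three hn, rpow_div_three_pow_three hC, rpow_div_three_pow_three hσ.le]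
  rw [Real.rpow_neg hσ.le, Real.rpow_one, Real.rpow_two, Real.rpow_two, Real.rpow_two]
  norm_num
  ring

lemma four_le_of_mul_one_add_log_lt {n : ℕ} (h : 5 / 2 * (1 + log n) < n) : 4 ≤ n := by
  by_contra! hn
  have hlog2 := Real.log_two_gt_d9
  have hlog3 := Real.log_le_log (by norm_num : (0 : ℝ) < 2) (by norm_num : (2 : ℝ) ≤ 3)
  interval_cases n <;> norm_num at h <;> linarith

/-- The threshold `τ = 5C/(2E)` balances the `C/τ` blocks against the windows of length
`R ≈ σ²/τ²`; the lower bound on `L` absorbs the rounding of `R` and the extra block. -/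
lemma exists_threshold {n C σ L E : ℝ} (hC : 0 < C) (hσ : 0 < σ)
    (hE3 : E ^ 3 = 16 * n * C ^ 2 / σ ^ 2) (hE : 5 / 2 ≤ E) (hL : 1 + 2 * log 2 ≤ L)
    (hn : L * E < n) :
    ∃ τ > 0, ∃ R : ℕ, 1 ≤ R ∧ R * τ ^ 2 ≤ σ ^ 2 ∧ (C / τ + 1) * L + n / R ≤ L * E := by
  have hE0 : 0 < E := by linarith
  have hlog2 := Real.log_two_gt_d9
  set ρ := 64 * n / (25 * E) with hρ_def
  have hρ : σ ^ 2 / (5 * C / (2 * E)) ^ 2 = ρ := by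
    rw [hρ_def]
    field_simp at hE3 ⊢
    linear_combination 100 * hE3
  have hEρ : 25 * E * ρ = 64 * n := by rw [hρ_def]; field_simp
  have hρ6 : 6 ≤ ρ := by nlinarith
  have hR : ρ - 1 < ⌊ρ⌋₊ := Nat.sub_one_lt_floor ρ
  have hR0 : (0 : ℝ) < ⌊ρ⌋₊ := by linarith
  refine ⟨5 * C / (2 * E), by positivity, ⌊ρ⌋₊, Nat.le_floor (by push_cast; linarith), ?_, ?_⟩
  · rw [← le_div_iff₀ (by positivity), hρ]
    exact Nat.floor_le (by linarith)
  · have hCτ : C / (5 * C / (2 * E)) = 2 * E / 5 := by field_simp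
    have hnR : n / ⌊ρ⌋₊ ≤ 15 * E / 32 := by
      rw [div_le_iff₀ hR0]
      nlinarith
    rw [hCτ]
    nlinarith [mul_nonneg (by linarith : 0 ≤ L - 1 - 2 * log 2) (by linarith : 0 ≤ E - 5 / 2)]

theorem stmt_15_general (n : ℕ) (θ θhat : ℕ → ℝ) (C σ κ : ℝ)
    (hσ : 0 < σ)
    (hTV : ∑ t ∈ Finset.Icc 2 n, |θ t - θ (t - 1)| ≤ C)
    (hpt : ∀ t ∈ Finset.Icc 1 n, ∀ r ∈ Finset.Icc 1 t,
      |θhat t - θ t| ≤ κ *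
        max ((Finset.range (Nat.log 2 r + 1)).sup'
            (Finset.nonempty_range_iff.mpr (Nat.succ_ne_zero _))
            (fun i => |(∑ u ∈ Finset.Icc (t - 2 ^ i + 1) t, θ u) / (2 ^ i : ℝ) - θ t|))
          (σ / Real.sqrt r)) :
    ∑ t ∈ Finset.Icc 1 n, (θhat t - θ t) ^ 2 ≤
      κ ^ 2 * σ ^ 2 * (1 + Real.log n) *
        max 1 ((4 : ℝ) ^ ((2 : ℝ) / 3) * (n : ℝ) ^ ((1 : ℝ) / 3) * C ^ ((2 : ℝ) / 3) *
          σ ^ (-(2 : ℝ) / 3)) := by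
  rw [sum_Icc_two_eq_localTV] at hTV
  have hC : 0 ≤ C := (localTV_nonneg θ).trans hTV
  set E := (4 : ℝ) ^ ((2 : ℝ) / 3) * (n : ℝ) ^ ((1 : ℝ) / 3) * C ^ ((2 : ℝ) / 3) *
    σ ^ (-(2 : ℝ) / 3)
  have hE3 : E ^ 3 = 16 * n * C ^ 2 / σ ^ 2 := rate_pow_three (Nat.cast_nonneg n) hC hσ
  rcases le_or_gt ((n : ℝ) * C ^ 2) (σ ^ 2) with hsmall | hlarge
  · exact (sum_sq_le_of_mul_sq_le hσ.le hpt hTV hsmall).trans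
      (le_mul_of_one_le_right (by positivity) (le_max_left _ _))
  have hE : 5 / 2 ≤ E := by
    refine le_of_pow_le_pow_left₀ three_ne_zero (by positivity) ?_
    rw [hE3, le_div_iff₀ (by positivity)]
    nlinarith
  rw [max_eq_right (by linarith)]
  rcases le_or_gt (n : ℝ) ((1 + log n) * E) with hfew | hmany
  · calc ∑ t ∈ Icc 1 n, (θhat t - θ t) ^ 2 ≤ κ ^ 2 * σ ^ 2 * n := sum_sq_le_card hσ.le hpt
      _ ≤ κ ^ 2 * σ ^ 2 * ((1 + log n) * E) := by gcongr
      _ = _ := by ring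
  have hL : 1 + 2 * log 2 ≤ 1 + log n := by
    have h4 : (4 : ℝ) ≤ n := by exact_mod_cast four_le_of_mul_one_add_log_lt (by nlinarith)
    have := Real.log_le_log (by norm_num) h4
    rw [show (4 : ℝ) = 2 ^ 2 by norm_num, Real.log_pow] at this
    push_cast at this
    linarith
  have hCpos : 0 < C := hC.lt_of_ne (by rintro rfl; nlinarith)
  obtain ⟨τ, hτ, R, hR, hRτ, hbound⟩ := exists_threshold hCpos hσ hE3 hE hL hmany
  calc ∑ t ∈ Icc 1 n, (θhat t - θ t) ^ 2
      ≤ κ ^ 2 * σ ^ 2 * ((C / τ + 1) * (1 + log n) + n / R) :=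
        sum_sq_le_of_threshold hσ.le hpt hTV hτ hR hRτ
    _ ≤ κ ^ 2 * σ ^ 2 * ((1 + log n) * E) := by gcongr
    _ = _ := by ring

/-- squared-error risk for TV denoising: if the estimates satisfy the
point-wise guarantee `|θ̂_t − θ_t| ≤ κ·min_{r ∈ {1,…,t}} U_t(r)` (stated equivalently
as `∀ r ∈ {1,…,t}`), where
`U_t(r) = max(max_{s ∈ S(r)} |θ̄^{(t)}_s − θ_t|, σ/√r)`,
`θ̄^{(t)}_s = (θ_t + … + θ_{t−s+1})/s` and `S(r) = {1,2,4,…,2^⌊log₂ r⌋}`, and the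
total variation of `θ_{1:n}` is at most `C`, then
`Σ_{t=1}^n (θ̂_t − θ_t)² ≤ κ²σ²(1 + log n)·max(1, 4^{2/3} n^{1/3} C^{2/3} σ^{−2/3})`. -/
theorem stmt_15 (n : ℕ) (hn : 0 < n) (θ θhat : ℕ → ℝ) (C σ κ : ℝ)
    (hσ : 0 < σ) (hκ : 1 ≤ κ)
    (hTV : ∑ t ∈ Finset.Icc 2 n, |θ t - θ (t - 1)| ≤ C)
    (hpt : ∀ t ∈ Finset.Icc 1 n, ∀ r ∈ Finset.Icc 1 t,
      |θhat t - θ t| ≤ κ *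
        max ((Finset.range (Nat.log 2 r + 1)).sup'
            (Finset.nonempty_range_iff.mpr (Nat.succ_ne_zero _))
            (fun i => |(∑ u ∈ Finset.Icc (t - 2 ^ i + 1) t, θ u) / (2 ^ i : ℝ) - θ t|))
          (σ / Real.sqrt r)) :
    ∑ t ∈ Finset.Icc 1 n, (θhat t - θ t) ^ 2 ≤
      κ ^ 2 * σ ^ 2 * (1 + Real.log n) *
        max 1 ((4 : ℝ) ^ ((2 : ℝ) / 3) * (n : ℝ) ^ ((1 : ℝ) / 3) * C ^ ((2 : ℝ) / 3) *
          σ ^ (-(2 : ℝ) / 3)) :=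
  stmt_15_general n θ θhat C σ κ hσ hTV hpt
end

section
/- Let θ_1, …, θ_n ∈ ℝ satisfy Σ_{t=2}^n |θ_t − θ_{t−1}| ≤ C, let σ > 0 and κ ≥ 1, and for each time t let θ̄^{(t)}_{s} = (θ_t + θ_{t−1} + … + θ_{t−s+1})/s denote the backward average of length s ≤ t, S(r) = {1, 2, 4, …, 2^{⌊log₂ r⌋}}, and U_t(r) = max( max_{s ∈ S(r)} |θ̄^{(t)}_{s} − θ_t|, σ/√r ). Suppose estimates θ̂_1, …, θ̂_n satisfy the point-wise guarantee |θ̂_t − θ_t| ≤ κ·min_{r ∈ {1, …, t}} U_t(r) for every t ∈ {1, …, n}. Then the absolute-error risk satisfies Σ_{t=1}^n |θ̂_t − θ_t| ≤ 2·κ·σ·√( n·max( 1, 4^{2/3}·n^{1/3}·C^{2/3}·σ^{−2/3} ) ); in particular Σ_{t=1}^n |θ̂_t − θ_t| = O( κ·( n^{2/3}·C^{1/3}·σ^{2/3} + σ·√n ) ), matching the minimax rate for total-variation denoising up to logarithmic factors. -/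
/-!
Cut `{1, …, n}` greedily into blocks `(a, b]` on which the variation `V` of `θ` satisfies
`V * √(b - a) ≤ σ`. At a time `t` of such a block take `r = t - a`: every dyadic backward
average of length at most `r` only uses values inside the block, so `U_t(r) ≤ σ / √r`, and the
block contributes at most `κ σ ∑_{r ≤ b - a} r^{-1/2} ≤ 2 κ σ √(b - a)`. By Cauchy–Schwarz the
`m` blocks together contribute at most `2 κ σ √(m n)`.

A greedy block that is not the last one cannot be extended by one point, so
`σ < V' * √(2 (b - a))` with `V'` the variation on the extended block. The extended blocks overlap
in no jump, hence `∑ 1 / √(b - a) ≤ √2 C / σ`; together with `∑ (b - a) ≤ n` and Cauchy–Schwarz this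
gives `(m - 1)³ ≤ 2 n C² / σ²`, i.e. `m ≤ max 1 (4^{2/3} n^{1/3} C^{2/3} σ^{-2/3})`.
-/

open Finset Real

lemma sum_Ioc_one_div_sqrt_sub_le (a : ℕ) {b : ℕ} (hab : a ≤ b) :
    ∑ t ∈ Ioc a b, 1 / √((t : ℝ) - a) ≤ 2 * √((b : ℝ) - a) := by
  induction b, hab using Nat.le_induction with
  | base => simp
  | succ b hab ih =>
    rw [sum_Ioc_succ_top hab]
    set x : ℝ := b - a
    have hx : 0 ≤ x := sub_nonneg.mpr (Nat.cast_le.mpr hab)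
    have hx1 : ((b + 1 : ℕ) : ℝ) - a = x + 1 := by push_cast; ring
    have hpos : 0 < √(x + 1) := sqrt_pos.mpr (by linarith)
    have hstep : 1 / √(x + 1) ≤ 2 * √(x + 1) - 2 * √x := by
      rw [div_le_iff₀ hpos]
      nlinarith [sq_sqrt hx, sq_sqrt (by linarith : 0 ≤ x + 1), sq_nonneg (√(x + 1) - √x)]
    rw [hx1]
    linarith

lemma sum_sqrt_le_sqrt_card_mul_sum {ι : Type*} (s : Finset ι) {x : ι → ℝ}
    (hx : ∀ i ∈ s, 0 ≤ x i) : ∑ i ∈ s, √(x i) ≤ √(#s * ∑ i ∈ s, x i) := by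
  have h := sum_mul_le_sqrt_mul_sqrt s (fun _ => 1) (fun i => √(x i))
  rw [sum_congr rfl fun i hi => sq_sqrt (hx i hi)] at h
  simpa [sqrt_mul (Nat.cast_nonneg _)] using h

lemma card_pow_three_le_mul_sq {ι : Type*} (s : Finset ι) {x : ι → ℝ} (hx : ∀ i ∈ s, 0 < x i)
    {N B : ℝ} (hN : ∑ i ∈ s, x i ≤ N) (hB : ∑ i ∈ s, 1 / √(x i) ≤ B) :
    (#s : ℝ) ^ 3 ≤ N * B ^ 2 := by
  set q := ∑ i ∈ s, √(x i)
  set p := ∑ i ∈ s, 1 / √(x i)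
  have hp : 0 ≤ p := sum_nonneg fun i _ => by positivity
  have hq : 0 ≤ q := sum_nonneg fun i _ => by positivity
  have hcard : (#s : ℝ) ^ 2 ≤ q * p := by
    have h := sum_mul_sq_le_sq_mul_sq s (fun i => √√(x i)) (fun i => 1 / √√(x i))
    have h1 : ∀ i ∈ s, √√(x i) * (1 / √√(x i)) = 1 := fun i hi => by
      have := hx i hi; field_simp
    have h2 : ∀ i ∈ s, (1 / √√(x i)) ^ 2 = 1 / √(x i) := fun i _ => by
      rw [div_pow, one_pow, sq_sqrt (sqrt_nonneg _)]
    rwa [sum_congr rfl h1, sum_congr rfl fun i _ => sq_sqrt (sqrt_nonneg (x i)),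
      sum_congr rfl h2, sum_const, nsmul_one] at h
  have hqN : q ^ 2 ≤ #s * N := by
    calc q ^ 2 ≤ √(#s * ∑ i ∈ s, x i) ^ 2 :=
          pow_le_pow_left₀ hq (sum_sqrt_le_sqrt_card_mul_sum s fun i hi => (hx i hi).le) 2
      _ ≤ #s * N := by
        rw [sq_sqrt (mul_nonneg (Nat.cast_nonneg _) (sum_nonneg fun i hi => (hx i hi).le))]
        gcongr
  rcases (Nat.cast_nonneg #s : (0 : ℝ) ≤ #s).eq_or_lt with h0 | hpos
  · have hN0 : 0 ≤ N := (sum_nonneg fun i hi => (hx i hi).le).trans hN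
    rw [← h0, zero_pow three_ne_zero]; positivity
  · have : (#s : ℝ) * (#s ^ 3) ≤ #s * (N * B ^ 2) := by
      nlinarith [pow_le_pow_left₀ (by positivity) hcard 2, mul_le_mul hB hB hp (hp.trans hB)]
    exact le_of_mul_le_mul_left this hpos

lemma sum_range_sum_Ioc {M : Type*} [AddCommMonoid M] (h : ℕ → M) {g : ℕ → ℕ} (hg : Monotone g)
    (k : ℕ) : ∑ j ∈ range k, ∑ i ∈ Ioc (g j) (g (j + 1)), h i = ∑ i ∈ Ioc (g 0) (g k), h i := by
  induction k with
  | zero => simp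
  | succ k ih => rw [sum_range_succ, ih, sum_Ioc_consecutive _ (hg k.zero_le) (hg k.le_succ)]

/-- The variation of `θ` along the points `a, a + 1, …, b`. -/
def seqVariation (θ : ℕ → ℝ) (a b : ℕ) : ℝ := ∑ t ∈ Ioc a b, |θ t - θ (t - 1)|

lemma seqVariation_nonneg (θ : ℕ → ℝ) (a b : ℕ) : 0 ≤ seqVariation θ a b :=
  sum_nonneg fun _ _ => abs_nonneg _

lemma seqVariation_mono (θ : ℕ → ℝ) {a a' b b' : ℕ} (ha : a' ≤ a) (hb : b ≤ b') :
    seqVariation θ a b ≤ seqVariation θ a' b' :=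
  sum_le_sum_of_subset_of_nonneg (Ioc_subset_Ioc ha hb) fun _ _ _ => abs_nonneg _

lemma abs_sub_le_seqVariation (θ : ℕ → ℝ) {u t : ℕ} (hut : u ≤ t) :
    |θ t - θ u| ≤ seqVariation θ u t := by
  induction t, hut using Nat.le_induction with
  | base => simp [seqVariation]
  | succ t hut ih =>
    rw [seqVariation, sum_Ioc_succ_top hut, Nat.add_sub_cancel]
    exact (abs_sub_le _ (θ t) _).trans (by rw [add_comm]; exact add_le_add_left ih _)

lemma abs_sum_Icc_div_sub_le (θ : ℕ → ℝ) {k t : ℕ} (hk : 0 < k) (hkt : k ≤ t) :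
    |(∑ u ∈ Icc (t - k + 1) t, θ u) / (k : ℝ) - θ t| ≤ seqVariation θ (t - k + 1) t := by
  have hcard : #(Icc (t - k + 1) t) = k := by rw [Nat.card_Icc]; omega
  have hk' : (0 : ℝ) < k := Nat.cast_pos.mpr hk
  have hmean : (∑ u ∈ Icc (t - k + 1) t, θ u) / (k : ℝ) - θ t =
      (∑ u ∈ Icc (t - k + 1) t, (θ u - θ t)) / k := by
    rw [sum_sub_distrib, sum_const, hcard, nsmul_eq_mul]; field_simp
  rw [hmean, abs_div, abs_of_pos hk', div_le_iff₀ hk']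
  calc |∑ u ∈ Icc (t - k + 1) t, (θ u - θ t)|
      ≤ ∑ u ∈ Icc (t - k + 1) t, |θ u - θ t| := abs_sum_le_sum_abs _ _
    _ ≤ ∑ u ∈ Icc (t - k + 1) t, seqVariation θ (t - k + 1) t := sum_le_sum fun u hu => by
        obtain ⟨hu1, hu2⟩ := mem_Icc.mp hu
        rw [abs_sub_comm]
        exact (abs_sub_le_seqVariation θ hu2).trans (seqVariation_mono θ hu1 le_rfl)
    _ = seqVariation θ (t - k + 1) t * k := by rw [sum_const, hcard, nsmul_eq_mul, mul_comm]

/-- The quantity `U_t(r)` of the point-wise guarantee. -/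
noncomputable def localBound (θ : ℕ → ℝ) (σ : ℝ) (t r : ℕ) : ℝ :=
  max ((range (Nat.log 2 r + 1)).sup' (nonempty_range_iff.mpr (Nat.succ_ne_zero _))
      (fun i => |(∑ u ∈ Icc (t - 2 ^ i + 1) t, θ u) / (2 ^ i : ℝ) - θ t|))
    (σ / √r)

lemma localBound_le (θ : ℕ → ℝ) (σ : ℝ) {t r : ℕ} (hr : 0 < r) (hrt : r ≤ t) :
    localBound θ σ t r ≤ max (seqVariation θ (t - r + 1) t) (σ / √r) := by
  refine max_le_max (sup'_le _ _ fun i hi => ?_) le_rfl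
  have hir : 2 ^ i ≤ r := (Nat.pow_le_pow_right two_pos (Nat.lt_succ_iff.mp
    (mem_range.mp hi))).trans (Nat.pow_log_le_self 2 hr.ne')
  have h := abs_sum_Icc_div_sub_le θ (Nat.two_pow_pos i) (hir.trans hrt)
  push_cast at h
  exact h.trans (seqVariation_mono θ (by omega) le_rfl)

/-- The blocks are `(f j, f (j + 1)]` for `j < m`; the cut points beyond `f m` carry no meaning. -/
structure IsGreedyPartition (P : ℕ → ℕ → Prop) (m : ℕ) (f : ℕ → ℕ) : Prop where
  strictMono : StrictMono f
  block : ∀ j < m, P (f j) (f (j + 1))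
  maximal : ∀ j, j + 1 < m → ¬ P (f j) (f (j + 1) + 1)

lemma exists_isGreedyPartition (P : ℕ → ℕ → Prop) (hP : ∀ a, P a (a + 1)) {a n : ℕ}
    (han : a < n) : ∃ m f, f 0 = a ∧ f m = n ∧ IsGreedyPartition P m f := by
  classical
  induction hd : n - a using Nat.strong_induction_on generalizing a with
  | _ d ih =>
  obtain ⟨b, hb⟩ : ∃ b, Nat.findGreatest (P a) n = b := ⟨_, rfl⟩
  have hab : a + 1 ≤ b := hb ▸ Nat.le_findGreatest han (hP a)
  have hPb : P a b := hb ▸ Nat.findGreatest_spec han (hP a)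
  rcases (hb ▸ Nat.findGreatest_le n : b ≤ n).lt_or_eq with hbn | hbn
  · obtain ⟨m, f, hf0, hfm, hf⟩ := ih (n - b) (by omega) hbn rfl
    refine ⟨m + 1, fun j => Nat.casesOn j a f, rfl, hfm, ⟨?_, ?_, ?_⟩⟩
    · refine strictMono_nat_of_lt_succ fun j => ?_
      cases j with
      | zero => show a < f 0; omega
      | succ j => exact hf.strictMono j.lt_succ_self
    · rintro (_ | j) hj
      · show P a (f 0); rwa [hf0]
      · exact hf.block j (by omega)
    · rintro (_ | j) hj
      · show ¬ P a (f 0 + 1)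
        exact Nat.findGreatest_is_greatest (n := n) (by omega) (by omega)
      · exact hf.maximal j (by omega)
  · refine ⟨1, fun j => Nat.casesOn j a (n + ·), rfl, rfl, ⟨?_, ?_, ?_⟩⟩
    · refine strictMono_nat_of_lt_succ fun j => ?_
      cases j with
      | zero => exact han
      | succ j => exact Nat.lt_succ_self (n + j)
    · intro j hj
      obtain rfl : j = 0 := by omega
      exact hbn ▸ hPb
    · intro j hj; omega

def LowVariationBlock (θ : ℕ → ℝ) (σ : ℝ) (a b : ℕ) : Prop :=
  seqVariation θ (a + 1) b * √((b : ℝ) - a) ≤ σ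

lemma lowVariationBlock_succ (θ : ℕ → ℝ) {σ : ℝ} (hσ : 0 ≤ σ) (a : ℕ) :
    LowVariationBlock θ σ a (a + 1) := by
  simpa [LowVariationBlock, seqVariation] using hσ

lemma sum_abs_sub_le_of_lowVariationBlock (θ θhat : ℕ → ℝ) {σ κ : ℝ} (hσ : 0 ≤ σ) (hκ : 0 ≤ κ)
    {a b : ℕ} (hab : a < b) (hblock : LowVariationBlock θ σ a b)
    (hpt : ∀ t ∈ Ioc a b, |θhat t - θ t| ≤ κ * localBound θ σ t (t - a)) :
    ∑ t ∈ Ioc a b, |θhat t - θ t| ≤ 2 * κ * σ * √((b : ℝ) - a) := by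
  have hba : (0 : ℝ) < b - a := sub_pos.mpr (Nat.cast_lt.mpr hab)
  have hvar : seqVariation θ (a + 1) b ≤ σ / √((b : ℝ) - a) :=
    (le_div_iff₀ (sqrt_pos.mpr hba)).mpr hblock
  have hpoint : ∀ t ∈ Ioc a b, |θhat t - θ t| ≤ κ * σ * (1 / √((t : ℝ) - a)) := by
    intro t ht
    obtain ⟨hat, htb⟩ := mem_Ioc.mp ht
    have hcast : ((t - a : ℕ) : ℝ) = t - a := Nat.cast_sub hat.le
    have hta : (0 : ℝ) < t - a := sub_pos.mpr (Nat.cast_lt.mpr hat)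
    have hlen : σ / √((b : ℝ) - a) ≤ σ / √((t : ℝ) - a) :=
      div_le_div_of_nonneg_left hσ (sqrt_pos.mpr hta)
        (sqrt_le_sqrt (by linarith [(Nat.cast_le (α := ℝ)).mpr htb]))
    have hU : localBound θ σ t (t - a) ≤ σ / √((t : ℝ) - a) := by
      refine (localBound_le θ σ (by omega) (by omega)).trans ?_
      rw [show t - (t - a) + 1 = a + 1 by omega, hcast]
      exact max_le (((seqVariation_mono θ le_rfl htb).trans hvar).trans hlen) le_rfl
    calc |θhat t - θ t| ≤ κ * localBound θ σ t (t - a) := hpt t ht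
      _ ≤ κ * (σ / √((t : ℝ) - a)) := mul_le_mul_of_nonneg_left hU hκ
      _ = κ * σ * (1 / √((t : ℝ) - a)) := by ring
  calc ∑ t ∈ Ioc a b, |θhat t - θ t| ≤ ∑ t ∈ Ioc a b, κ * σ * (1 / √((t : ℝ) - a)) :=
        sum_le_sum hpoint
    _ = κ * σ * ∑ t ∈ Ioc a b, 1 / √((t : ℝ) - a) := (mul_sum _ _ _).symm
    _ ≤ κ * σ * (2 * √((b : ℝ) - a)) :=
        mul_le_mul_of_nonneg_left (sum_Ioc_one_div_sqrt_sub_le a hab.le) (mul_nonneg hκ hσ)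
    _ = 2 * κ * σ * √((b : ℝ) - a) := by ring

lemma sum_abs_sub_le_of_isGreedyPartition (θ θhat : ℕ → ℝ) {σ κ : ℝ} (hσ : 0 ≤ σ)
    (hκ : 0 ≤ κ) {m n : ℕ} {f : ℕ → ℕ} (hf : IsGreedyPartition (LowVariationBlock θ σ) m f)
    (hf0 : f 0 = 0) (hfm : f m = n)
    (hpt : ∀ t ∈ Icc 1 n, ∀ r ∈ Icc 1 t, |θhat t - θ t| ≤ κ * localBound θ σ t r) :
    ∑ t ∈ Icc 1 n, |θhat t - θ t| ≤ 2 * κ * σ * √(m * n) := by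
  have hlen : ∀ j, (0 : ℝ) ≤ f (j + 1) - f j := fun j =>
    sub_nonneg.mpr (Nat.cast_le.mpr (hf.strictMono.monotone j.le_succ))
  have hblock (j : ℕ) (hj : j < m) : ∑ t ∈ Ioc (f j) (f (j + 1)), |θhat t - θ t| ≤
      2 * κ * σ * √((f (j + 1) : ℝ) - f j) := by
    refine sum_abs_sub_le_of_lowVariationBlock θ θhat hσ hκ (hf.strictMono j.lt_succ_self)
      (hf.block j hj) fun t ht => hpt t ?_ (t - f j) ?_
    · have := hfm ▸ hf.strictMono.monotone (Nat.succ_le_of_lt hj)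
      exact mem_Icc.mpr ⟨by have := (mem_Ioc.mp ht).1; omega, (mem_Ioc.mp ht).2.trans this⟩
    · exact mem_Icc.mpr ⟨by have := (mem_Ioc.mp ht).1; omega, Nat.sub_le t (f j)⟩
  have hsqrt : ∑ j ∈ range m, √((f (j + 1) : ℝ) - f j) ≤ √(m * n) := by
    have h := sum_sqrt_le_sqrt_card_mul_sum (range m) fun j _ => hlen j
    rwa [card_range, sum_range_sub (fun j => (f j : ℝ)), hf0, hfm, Nat.cast_zero, sub_zero] at h
  calc ∑ t ∈ Icc 1 n, |θhat t - θ t|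
      = ∑ j ∈ range m, ∑ t ∈ Ioc (f j) (f (j + 1)), |θhat t - θ t| := by
        rw [sum_range_sum_Ioc _ hf.strictMono.monotone, hf0, hfm, ← Icc_add_one_left_eq_Ioc,
          zero_add]
    _ ≤ ∑ j ∈ range m, 2 * κ * σ * √((f (j + 1) : ℝ) - f j) :=
        sum_le_sum fun j hj => hblock j (mem_range.mp hj)
    _ = 2 * κ * σ * ∑ j ∈ range m, √((f (j + 1) : ℝ) - f j) := (mul_sum _ _ _).symm
    _ ≤ 2 * κ * σ * √(m * n) := by gcongr

lemma one_div_sqrt_le_of_not_lowVariationBlock (θ : ℕ → ℝ) {σ : ℝ} (hσ : 0 < σ) {a b : ℕ}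
    (hab : a < b) (h : ¬ LowVariationBlock θ σ a (b + 1)) :
    1 / √((b : ℝ) - a) ≤ √2 / σ * seqVariation θ (a + 1) (b + 1) := by
  rw [LowVariationBlock, not_le] at h
  have hba : (1 : ℝ) ≤ b - a := by
    have : (a : ℝ) + 1 ≤ b := by exact_mod_cast hab
    linarith
  have hlen : √(((b + 1 : ℕ) : ℝ) - a) ≤ √2 * √((b : ℝ) - a) := by
    rw [← sqrt_mul zero_le_two]
    exact sqrt_le_sqrt (by push_cast; linarith)
  have hpos : 0 < √((b : ℝ) - a) := sqrt_pos.mpr (by linarith)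
  rw [div_le_iff₀ hpos, div_mul_eq_mul_div, div_mul_eq_mul_div, le_div_iff₀ hσ]
  nlinarith [seqVariation_nonneg θ (a + 1) (b + 1)]

lemma pred_pow_three_le_of_isGreedyPartition (θ : ℕ → ℝ) {σ C : ℝ} (hσ : 0 < σ) {m n : ℕ}
    {f : ℕ → ℕ} (hf : IsGreedyPartition (LowVariationBlock θ σ) m f) (hf0 : f 0 = 0)
    (hfm : f m = n) (hTV : seqVariation θ 1 n ≤ C) :
    ((m - 1 : ℕ) : ℝ) ^ 3 ≤ 2 * n * C ^ 2 / σ ^ 2 := by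
  rcases Nat.eq_zero_or_pos m with rfl | hm
  · rw [zero_tsub, Nat.cast_zero, zero_pow three_ne_zero]
    positivity
  have hlen : ∀ j, (0 : ℝ) < f (j + 1) - f j := fun j =>
    sub_pos.mpr (Nat.cast_lt.mpr (hf.strictMono j.lt_succ_self))
  have hvar : ∑ j ∈ range (m - 1), seqVariation θ (f j + 1) (f (j + 1) + 1) ≤ C :=
    calc ∑ j ∈ range (m - 1), seqVariation θ (f j + 1) (f (j + 1) + 1)
        = seqVariation θ 1 (f (m - 1) + 1) := by
          simpa [seqVariation, hf0] using
            sum_range_sum_Ioc (fun t => |θ t - θ (t - 1)|) (g := (f · + 1))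
              (fun _ _ h => Nat.add_le_add_right (hf.strictMono.monotone h) 1) (m - 1)
      _ ≤ seqVariation θ 1 n :=
          seqVariation_mono θ le_rfl (hfm ▸ hf.strictMono (Nat.sub_lt hm one_pos))
      _ ≤ C := hTV
  have h := card_pow_three_le_mul_sq (range (m - 1)) (fun j _ => hlen j) (N := n)
    (B := √2 * C / σ) ?_ ?_
  · rw [card_range, div_pow, mul_pow, sq_sqrt zero_le_two] at h
    exact h.trans_eq (by ring)
  · rw [sum_range_sub (fun j => (f j : ℝ)), hf0, Nat.cast_zero, sub_zero, ← hfm]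
    exact Nat.cast_le.mpr (hf.strictMono.monotone (Nat.sub_le m 1))
  · calc ∑ j ∈ range (m - 1), 1 / √((f (j + 1) : ℝ) - f j)
        ≤ ∑ j ∈ range (m - 1), √2 / σ * seqVariation θ (f j + 1) (f (j + 1) + 1) :=
          sum_le_sum fun j hj => one_div_sqrt_le_of_not_lowVariationBlock θ hσ
            (hf.strictMono j.lt_succ_self) (hf.maximal j (by have := mem_range.mp hj; omega))
      _ = √2 / σ * ∑ j ∈ range (m - 1), seqVariation θ (f j + 1) (f (j + 1) + 1) :=
          (mul_sum _ _ _).symm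
      _ ≤ √2 / σ * C := mul_le_mul_of_nonneg_left hvar (by positivity)
      _ = √2 * C / σ := by ring

lemma natCast_le_max_one_of_pred_pow_three_le {m : ℕ} {n C σ : ℝ} (hn : 0 ≤ n) (hC : 0 ≤ C)
    (hσ : 0 < σ) (h : ((m - 1 : ℕ) : ℝ) ^ 3 ≤ 2 * n * C ^ 2 / σ ^ 2) :
    (m : ℝ) ≤ max 1 ((4 : ℝ) ^ ((2 : ℝ) / 3) * n ^ ((1 : ℝ) / 3) * C ^ ((2 : ℝ) / 3) *
      σ ^ (-(2 : ℝ) / 3)) := by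
  set X := (4 : ℝ) ^ ((2 : ℝ) / 3) * n ^ ((1 : ℝ) / 3) * C ^ ((2 : ℝ) / 3) * σ ^ (-(2 : ℝ) / 3)
  have hX : 0 ≤ X := by positivity
  have hcube : ∀ x p : ℝ, 0 ≤ x → (x ^ p) ^ 3 = x ^ (p * 3) := fun x p hx => by
    rw [← rpow_natCast, ← rpow_mul hx]; norm_num
  have hX3 : X ^ 3 = 8 * (2 * n * C ^ 2 / σ ^ 2) := by
    simp only [X, mul_pow]
    rw [hcube _ _ (by norm_num), hcube _ _ hn, hcube _ _ hC, hcube _ _ hσ.le]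
    norm_num
    ring
  rcases Nat.lt_or_ge m 2 with hm | hm
  · exact le_max_of_le_left (by exact_mod_cast (by omega : m ≤ 1))
  · refine le_max_of_le_right ?_
    have hm2 : (m : ℝ) ≤ 2 * ((m - 1 : ℕ) : ℝ) := by exact_mod_cast (by omega : m ≤ 2 * (m - 1))
    refine hm2.trans ((pow_le_pow_iff_left₀ (by positivity) hX three_ne_zero).mp ?_)
    rw [hX3, mul_pow]
    linarith

/-- absolute-error risk for TV denoising: if the estimates satisfy the
point-wise guarantee `|θ̂_t − θ_t| ≤ κ·min_{r ∈ {1,…,t}} U_t(r)` (stated equivalently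
as `∀ r ∈ {1,…,t}`), where
`U_t(r) = max(max_{s ∈ S(r)} |θ̄^{(t)}_s − θ_t|, σ/√r)`,
`θ̄^{(t)}_s = (θ_t + … + θ_{t−s+1})/s` and `S(r) = {1,2,4,…,2^⌊log₂ r⌋}`, and the
total variation of `θ_{1:n}` is at most `C`, then
`Σ_{t=1}^n |θ̂_t − θ_t| ≤ 2κσ·√(n·max(1, 4^{2/3} n^{1/3} C^{2/3} σ^{−2/3}))`. -/
theorem stmt_16 (n : ℕ) (hn : 0 < n) (θ θhat : ℕ → ℝ) (C σ κ : ℝ)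
    (hσ : 0 < σ) (hκ : 1 ≤ κ)
    (hTV : ∑ t ∈ Finset.Icc 2 n, |θ t - θ (t - 1)| ≤ C)
    (hpt : ∀ t ∈ Finset.Icc 1 n, ∀ r ∈ Finset.Icc 1 t,
      |θhat t - θ t| ≤ κ *
        max ((Finset.range (Nat.log 2 r + 1)).sup'
            (Finset.nonempty_range_iff.mpr (Nat.succ_ne_zero _))
            (fun i => |(∑ u ∈ Finset.Icc (t - 2 ^ i + 1) t, θ u) / (2 ^ i : ℝ) - θ t|))
          (σ / Real.sqrt r)) :
    ∑ t ∈ Finset.Icc 1 n, |θhat t - θ t| ≤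
      2 * κ * σ * Real.sqrt (n *
        max 1 ((4 : ℝ) ^ ((2 : ℝ) / 3) * (n : ℝ) ^ ((1 : ℝ) / 3) * C ^ ((2 : ℝ) / 3) *
          σ ^ (-(2 : ℝ) / 3))) := by
  have hpt' : ∀ t ∈ Icc 1 n, ∀ r ∈ Icc 1 t, |θhat t - θ t| ≤ κ * localBound θ σ t r := hpt
  have hTV' : seqVariation θ 1 n ≤ C := by rwa [seqVariation, ← Icc_add_one_left_eq_Ioc]
  obtain ⟨m, f, hf0, hfm, hf⟩ :=
    exists_isGreedyPartition (LowVariationBlock θ σ) (lowVariationBlock_succ θ hσ.le) hn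
  have hm := natCast_le_max_one_of_pred_pow_three_le n.cast_nonneg
    ((seqVariation_nonneg θ 1 n).trans hTV') hσ
    (pred_pow_three_le_of_isGreedyPartition θ hσ hf hf0 hfm hTV')
  calc ∑ t ∈ Icc 1 n, |θhat t - θ t| ≤ 2 * κ * σ * √(m * n) :=
        sum_abs_sub_le_of_isGreedyPartition θ θhat hσ.le (zero_le_one.trans hκ) hf hf0 hfm hpt'
    _ ≤ _ := by
        gcongr 2 * κ * σ * √?_
        rw [mul_comm]
        exact mul_le_mul_of_nonneg_left hm n.cast_nonneg
end
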